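/- arXiv:2403.08610 — 2 statements merged into one kernel-verified Lean document; each statement's English description precedes it below -/
import Mathlib

section
/- Let a < c < d < b be real numbers and let f_a, f_b, f_c, f_d ∈ {0,1} with f_b ≤ min(f_a, f_c, f_d). Suppose there exist payments p_a, p_b, p_c, p_d satisfying: d·(f_a - f_b) ≤ p_a - p_b ≤ b·(f_a - f_b), d·(f_c - f_b) ≤ p_c - p_b ≤ b·(f_c - f_b), a·(f_c - f_a) ≥ p_c - p_a ≥ c·(f_c - f_a) whenever f_a ≠ f_c (i.e., a·(f_a - f_c) ≤ p_a - p_c ≤ c·(f_a - f_c)). Then f_a = f_c. -/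
/-- Top separation case of the Taxation Principle for k-step OSP (Lemma 4.6, Case 1):
the OSP payment constraints force the outcomes of types `a` and `c` to coincide
in a binary-outcome setting. -/
theorem stmt3 (a c d b fa fb fc fd pa pb pc pd : ℝ)
    (hac : a < c) (hcd : c < d) (hdb : d < b)
    (hfa : fa ∈ ({0, 1} : Set ℝ)) (hfb : fb ∈ ({0, 1} : Set ℝ))
    (hfc : fc ∈ ({0, 1} : Set ℝ)) (hfd : fd ∈ ({0, 1} : Set ℝ))
    (hfbmin : fb ≤ min fa (min fc fd))
    (h1l : d * (fa - fb) ≤ pa - pb) (h1r : pa - pb ≤ b * (fa - fb))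
    (h2l : d * (fc - fb) ≤ pc - pb) (h2r : pc - pb ≤ b * (fc - fb))
    (h3 : fa ≠ fc → a * (fa - fc) ≤ pa - pc ∧ pa - pc ≤ c * (fa - fc)) :
    fa = fc := by
  by_contra hne
  obtain ⟨h3l, h3r⟩ := h3 hne
  simp only [Set.mem_insert_iff, Set.mem_singleton_iff] at hfa hfb hfc hfd
  simp only [le_min_iff] at hfbmin
  rcases hfa with rfl | rfl <;> rcases hfc with rfl | rfl <;>
    rcases hfb with h | h <;> subst h <;> simp_all <;> linarith
end

section
/- Let (E, F) be a downward-closed set system (F ⊆ powerset(E), S ∈ F and T ⊆ S implies T ∈ F) that is a p-system: for every X ⊆ E with ur(X) ≠ 0, lr(X)/ur(X) ≥ p, where lr(X) and ur(X) are the minimum and maximum cardinalities of maximal-in-X members of F. Order E as e_1, …, e_n, let E_j = {e_1,…,e_j}, and suppose weights satisfy w(e_1) ≥ w(e_2) ≥ … ≥ w(e_n) ≥ 0. If G ∈ F is such that G ∩ E_j is a maximal feasible subset of E_j for every j, then w(G) ≥ p · w(OPT), where OPT is a maximum-weight member of F. -/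
/-!
Sort the ground set by decreasing weight and write `v j` for the weight of the `j`-th element
(`v j = 0` past the end). Abel summation expresses the weight of any set `S` as the nonnegative
combination `∑ j, (v j - v (j + 1)) * #(S ∩ E_{j+1})` of its prefix counts, so it suffices to
compare prefix counts. On the prefix `E_j`, the trace of `G` is maximal, hence has at least
`lowerRank E_j` elements, while the trace of `OPT` is feasible by downward closure, hence has at most
`upperRank E_j` elements; the p-system condition gives `p * #(OPT ∩ E_j) ≤ #(G ∩ E_j)`.
-/

open Finset

/-- `T` is a maximal feasible subset of `X` in the set system `F`. -/
def MaxIn {E : Type*} [DecidableEq E] (F : Finset (Finset E)) (X T : Finset E) : Prop :=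
  T ∈ F ∧ T ⊆ X ∧ ∀ e ∈ X, e ∉ T → insert e T ∉ F

/-- Lower rank of `X`: minimum cardinality of a maximal-in-`X` member of `F`. -/
noncomputable def lowerRank {E : Type*} [DecidableEq E] (F : Finset (Finset E))
    (X : Finset E) : ℕ :=
  sInf {k : ℕ | ∃ T : Finset E, MaxIn F X T ∧ T.card = k}

/-- Upper rank of `X`: maximum cardinality of a maximal-in-`X` member of `F`. -/
noncomputable def upperRank {E : Type*} [DecidableEq E] (F : Finset (Finset E))
    (X : Finset E) : ℕ :=
  sSup {k : ℕ | ∃ T : Finset E, MaxIn F X T ∧ T.card = k}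

section SetSystem

variable {E : Type*} [DecidableEq E] {F : Finset (Finset E)} {X S T : Finset E}

def IsPSystem (F : Finset (Finset E)) (p : ℝ) : Prop :=
  ∀ X : Finset E, upperRank F X ≠ 0 → p ≤ (lowerRank F X : ℝ) / (upperRank F X : ℝ)

lemma exists_maxIn_superset (hS : S ∈ F) (hSX : S ⊆ X) : ∃ T, MaxIn F X T ∧ S ⊆ T := by
  obtain ⟨T, hST, hmax⟩ := (F.filter (· ⊆ X)).exists_le_maximal (mem_filter.2 ⟨hS, hSX⟩)
  obtain ⟨hTF, hTX⟩ := mem_filter.1 hmax.prop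
  refine ⟨T, ⟨hTF, hTX, fun x hxX hxT hins => hxT ?_⟩, hST⟩
  exact hmax.2 (mem_filter.2 ⟨hins, insert_subset hxX hTX⟩) (subset_insert x T)
    (mem_insert_self x T)

lemma card_le_upperRank (hS : S ∈ F) (hSX : S ⊆ X) : #S ≤ upperRank F X := by
  obtain ⟨T, hT, hST⟩ := exists_maxIn_superset hS hSX
  have hbdd : BddAbove {k | ∃ T, MaxIn F X T ∧ #T = k} :=
    ⟨#X, by rintro k ⟨T, hT, rfl⟩; exact card_le_card hT.2.1⟩
  exact (card_le_card hST).trans (le_csSup hbdd ⟨T, hT, rfl⟩)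

lemma lowerRank_le_card (hT : MaxIn F X T) : lowerRank F X ≤ #T :=
  Nat.sInf_le ⟨T, hT, rfl⟩

lemma IsPSystem.mul_card_le_card_of_maxIn {p : ℝ} (hps : IsPSystem F p)
    (hS : S ∈ F) (hSX : S ⊆ X) (hT : MaxIn F X T) : p * #S ≤ #T := by
  have hSu := card_le_upperRank hS hSX
  rcases le_or_gt p 0 with hp | hp
  · exact (mul_nonpos_of_nonpos_of_nonneg hp (by positivity)).trans (by positivity)
  rcases (upperRank F X).eq_zero_or_pos with hu | hu
  · simp [Nat.le_zero.1 (hu ▸ hSu)]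
  calc p * #S ≤ p * upperRank F X := by gcongr
    _ ≤ lowerRank F X := (le_div_iff₀ (by exact_mod_cast hu)).1 (hps X hu.ne')
    _ ≤ #T := by exact_mod_cast lowerRank_le_card hT

end SetSystem

section AbelSummation

variable {ι : Type*} (σ : ι → ℕ) (v : ℕ → ℝ)

lemma sum_comp_eq_sum_range_sub_mul_card {N : ℕ} {S : Finset ι} (hN : ∀ x ∈ S, σ x < N) :
    ∑ x ∈ S, v (σ x) =
      ∑ j ∈ range N, (v j - v (j + 1)) * #{x ∈ S | σ x < j + 1} + v N * #S := by
  have hpoint : ∀ x ∈ S, v (σ x) =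
      ∑ j ∈ range N, (if σ x < j + 1 then v j - v (j + 1) else 0) + v N := by
    intro x hx
    have htel : ∑ j ∈ Ico (σ x) N, (v j - v (j + 1)) = v (σ x) - v N := by
      rw [← neg_sub (v N), ← sum_Ico_sub v (hN x hx).le, ← sum_neg_distrib]
      simp only [neg_sub]
    rw [← sum_filter, show {j ∈ range N | σ x < j + 1} = Ico (σ x) N by ext; simp; omega, htel,
      sub_add_cancel]
  rw [sum_congr rfl hpoint, sum_add_distrib, sum_comm, sum_const, nsmul_eq_mul, mul_comm _ (v N)]
  congr 1
  refine sum_congr rfl fun j _ => ?_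
  rw [← sum_filter, sum_const, nsmul_eq_mul, mul_comm]

lemma mul_sum_comp_le_sum_comp_of_card_prefix {p : ℝ} (hv : Antitone v) (hv0 : ∀ j, 0 ≤ v j)
    {A B : Finset ι} (hAB : ∀ j, p * #{x ∈ A | σ x < j} ≤ #{x ∈ B | σ x < j}) :
    p * ∑ x ∈ A, v (σ x) ≤ ∑ x ∈ B, v (σ x) := by
  set N := max (A.sup σ) (B.sup σ) + 1
  have hA : ∀ x ∈ A, σ x < N := fun x hx => Nat.lt_succ_of_le (le_max_of_le_left (le_sup hx))
  have hB : ∀ x ∈ B, σ x < N := fun x hx => Nat.lt_succ_of_le (le_max_of_le_right (le_sup hx))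
  rw [sum_comp_eq_sum_range_sub_mul_card σ v hA, sum_comp_eq_sum_range_sub_mul_card σ v hB,
    mul_add, mul_sum]
  refine add_le_add (sum_le_sum fun j _ => ?_) ?_
  · calc p * ((v j - v (j + 1)) * #{x ∈ A | σ x < j + 1})
        = (v j - v (j + 1)) * (p * #{x ∈ A | σ x < j + 1}) := by ring
      _ ≤ (v j - v (j + 1)) * #{x ∈ B | σ x < j + 1} :=
        mul_le_mul_of_nonneg_left (hAB _) (sub_nonneg.2 (hv j.le_succ))
  · rw [mul_left_comm]
    have := hAB N
    rw [filter_true_of_mem hA, filter_true_of_mem hB] at this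
    exact mul_le_mul_of_nonneg_left this (hv0 N)

end AbelSummation

theorem stmt7_general {E : Type*} [Fintype E] [DecidableEq E]
    (F : Finset (Finset E)) (hdc : ∀ S ∈ F, ∀ T ⊆ S, T ∈ F)
    (p : ℝ)
    (hps : ∀ X : Finset E, upperRank F X ≠ 0 →
      p ≤ (lowerRank F X : ℝ) / (upperRank F X : ℝ))
    (n : ℕ) (e : Fin n ≃ E) (w : E → ℝ)
    (hw0 : ∀ x : E, 0 ≤ w x)
    (hwmono : ∀ i j : Fin n, i ≤ j → w (e j) ≤ w (e i))
    (G : Finset E)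
    (hGmax : ∀ j : ℕ, MaxIn F (univ.filter (fun x : E => (e.symm x : ℕ) < j))
      (G ∩ univ.filter (fun x : E => (e.symm x : ℕ) < j)))
    (OPT : Finset E) (hOPT : OPT ∈ F) :
    p * ∑ x ∈ OPT, w x ≤ ∑ x ∈ G, w x := by
  set v : ℕ → ℝ := fun j => if h : j < n then w (e ⟨j, h⟩) else 0
  have hv0 : ∀ j, 0 ≤ v j := fun j => by dsimp only [v]; split <;> simp [hw0]
  have hv : Antitone v := by
    intro i j hij
    by_cases hj : j < n
    · simp only [v, dif_pos hj, dif_pos (hij.trans_lt hj)]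
      exact hwmono ⟨i, _⟩ ⟨j, hj⟩ hij
    · simpa [v, dif_neg hj] using hv0 i
  have hwv : ∀ x, w x = v (e.symm x) := fun x => by simp [v]
  simp only [hwv]
  refine mul_sum_comp_le_sum_comp_of_card_prefix _ v hv hv0 fun j => ?_
  have hG := hGmax j
  rw [inter_filter, inter_univ] at hG
  exact IsPSystem.mul_card_le_card_of_maxIn hps (hdc OPT hOPT _ (filter_subset _ _))
    (monotone_filter_left _ (subset_univ OPT)) hG

/-- Hausmann–Korte approximation guarantee for greedy-type algorithms on p-systems:
if `G ∈ F` is maximal on every weight-ordered prefix `E_j`, then its weight is at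
least `p` times the weight of an optimal member of `F`. -/
theorem stmt7 {E : Type*} [Fintype E] [DecidableEq E]
    (F : Finset (Finset E)) (hdc : ∀ S ∈ F, ∀ T ⊆ S, T ∈ F)
    (p : ℝ)
    (hps : ∀ X : Finset E, upperRank F X ≠ 0 →
      p ≤ (lowerRank F X : ℝ) / (upperRank F X : ℝ))
    (n : ℕ) (e : Fin n ≃ E) (w : E → ℝ)
    (hw0 : ∀ x : E, 0 ≤ w x)
    (hwmono : ∀ i j : Fin n, i ≤ j → w (e j) ≤ w (e i))
    (G : Finset E) (hG : G ∈ F)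
    (hGmax : ∀ j : ℕ, MaxIn F (univ.filter (fun x : E => (e.symm x : ℕ) < j))
      (G ∩ univ.filter (fun x : E => (e.symm x : ℕ) < j)))
    (OPT : Finset E) (hOPT : OPT ∈ F)
    (hOPTmax : ∀ S ∈ F, ∑ x ∈ S, w x ≤ ∑ x ∈ OPT, w x) :
    p * ∑ x ∈ OPT, w x ≤ ∑ x ∈ G, w x :=
  stmt7_general F hdc p hps n e w hw0 hwmono G hGmax OPT hOPT
end
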